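/- Let μ be an ε-product probability measure on V = V₁×⋯×V_k and let f,g : V → ℝ (approximate Parseval). Then |⟨f,g⟩ − Σ_{S⊆[k]} ⟨f^{=S}, g^{=S}⟩| ≤ 2^{4k}·ε·‖f‖₂·‖g‖₂. Moreover, if f is a T-junta (f(x) depends only on x_T), then |⟨f,g⟩ − Σ_{S⊆T} ⟨f^{=S}, g^{=S}⟩| ≤ 2^{4|T|}·ε·‖f‖₂·‖g‖₂. -/

import Mathlib

open Finset

namespace GLL

variable {k : ℕ} {V : Fin k → Type} [∀ i, Fintype (V i)] [∀ i, DecidableEq (V i)]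

/-- Expectation of `f` with respect to the (finitely supported) measure `μ`. -/
def expect (μ f : (∀ i, V i) → ℝ) : ℝ := ∑ x, μ x * f x

/-- `μ` is a probability measure. -/
def IsProb (μ : (∀ i, V i) → ℝ) : Prop := (∀ x, 0 ≤ μ x) ∧ ∑ x, μ x = 1

/-- The marginal `μ_S` evaluated at (the `S`-coordinates of) `x`. -/
def marg (μ : (∀ i, V i) → ℝ) (S : Finset (Fin k)) (x : ∀ i, V i) : ℝ :=
  ∑ z, if ∀ i ∈ S, z i = x i then μ z else 0

/-- The link (conditional) measure `μ_x` for `x ∈ V_S`, viewed as a measure on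
full points agreeing with `x` on `S`. -/
noncomputable def cond (μ : (∀ i, V i) → ℝ) (S : Finset (Fin k)) (x z : ∀ i, V i) : ℝ :=
  if ∀ i ∈ S, z i = x i then μ z / marg μ S x else 0

/-- The averaging operator `A_S`: `A_S f (x) = E_{y ∼ μ_{x_S}} [f(x_S, y)]`.
Applied to an `S'`-junta `f`, this is also the operator `A_{S',S}`. -/
noncomputable def Aop (μ : (∀ i, V i) → ℝ) (S : Finset (Fin k)) (f : (∀ i, V i) → ℝ)
    (x : ∀ i, V i) : ℝ :=
  ∑ z, cond μ S x z * f z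

/-- The Efron–Stein component `f^{=S} = ∑_{T ⊆ S} (-1)^{|S∖T|} A_T f`. -/
noncomputable def ES (μ : (∀ i, V i) → ℝ) (S : Finset (Fin k)) (f : (∀ i, V i) → ℝ)
    (x : ∀ i, V i) : ℝ :=
  ∑ T ∈ S.powerset, (-1 : ℝ) ^ (S.card - T.card) * Aop μ T f x

/-- The low-degree part `f^{≤ d} = ∑_{|S| ≤ d} f^{=S}`. -/
noncomputable def lowPart (μ : (∀ i, V i) → ℝ) (d : ℕ) (f : (∀ i, V i) → ℝ)
    (x : ∀ i, V i) : ℝ :=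
  ∑ S ∈ univ.powerset.filter (fun S : Finset (Fin k) => S.card ≤ d), ES μ S f x

/-- The Laplacian `L_S[f] = ∑_{T ⊇ S} f^{=T}`. -/
noncomputable def Lap (μ : (∀ i, V i) → ℝ) (S : Finset (Fin k)) (f : (∀ i, V i) → ℝ)
    (x : ∀ i, V i) : ℝ :=
  ∑ T ∈ univ.powerset.filter (fun T : Finset (Fin k) => S ⊆ T), ES μ T f x

/-- The truncated Laplacian `L_S^{≤d}[f] = ∑_{T ⊇ S, |T| ≤ d} f^{=T}`. -/
noncomputable def LapLe (μ : (∀ i, V i) → ℝ) (d : ℕ) (S : Finset (Fin k))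
    (f : (∀ i, V i) → ℝ) (x : ∀ i, V i) : ℝ :=
  ∑ T ∈ univ.powerset.filter (fun T : Finset (Fin k) => S ⊆ T ∧ T.card ≤ d), ES μ T f x

/-- The influence `I_{S,x}[f] = ‖L_S[f](x,·)‖²_{L²(μ_x)}`. -/
noncomputable def Inf (μ : (∀ i, V i) → ℝ) (S : Finset (Fin k)) (f : (∀ i, V i) → ℝ)
    (x : ∀ i, V i) : ℝ :=
  ∑ z, cond μ S x z * (Lap μ S f z) ^ 2

/-- The truncated influence `I^{≤d}_{S,x}[f] = ‖L_S^{≤d}[f](x,·)‖²_{L²(μ_x)}`. -/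
noncomputable def InfLe (μ : (∀ i, V i) → ℝ) (d : ℕ) (S : Finset (Fin k))
    (f : (∀ i, V i) → ℝ) (x : ∀ i, V i) : ℝ :=
  ∑ z, cond μ S x z * (LapLe μ d S f z) ^ 2

/-- `‖f‖₂²` with respect to `μ`. -/
def normSq (μ f : (∀ i, V i) → ℝ) : ℝ := ∑ x, μ x * (f x) ^ 2

/-- `‖f‖₄⁴` with respect to `μ`. -/
def norm4p4 (μ f : (∀ i, V i) → ℝ) : ℝ := ∑ x, μ x * (f x) ^ 4

/-- `‖f‖₂` with respect to `μ`. -/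
noncomputable def l2norm (μ f : (∀ i, V i) → ℝ) : ℝ := Real.sqrt (normSq μ f)

/-- `‖f‖_∞`: the maximum of `|f|` over the support of `μ`. -/
noncomputable def supNorm (μ f : (∀ i, V i) → ℝ) : ℝ :=
  sSup ((fun x => |f x|) '' {x | 0 < μ x})

/-- Inner product `⟨f, g⟩ = E_{x∼μ}[f(x) g(x)]`. -/
def inner' (μ f g : (∀ i, V i) → ℝ) : ℝ := ∑ x, μ x * (f x * g x)

/-- The pair `{i,j}`-skeleton of `μ` is `ε`-pseudorandom. -/
def PairPseudo (μ : (∀ i, V i) → ℝ) (ε : ℝ) (i j : Fin k) : Prop :=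
  ∀ (f₁ : V i → ℝ) (f₂ : V j → ℝ),
    |expect μ (fun x => f₁ (x i) * f₂ (x j)) -
        expect μ (fun x => f₁ (x i)) * expect μ (fun x => f₂ (x j))| ≤
      ε * Real.sqrt
        ((expect μ (fun x => f₁ (x i) ^ 2) - expect μ (fun x => f₁ (x i)) ^ 2) *
          (expect μ (fun x => f₂ (x j) ^ 2) - expect μ (fun x => f₂ (x j)) ^ 2))

/-- `μ` is an `ε`-product measure: every link of every restriction of size `≤ k - 2`
has `ε`-pseudorandom skeletons. -/
def EpsProduct (μ : (∀ i, V i) → ℝ) (ε : ℝ) : Prop :=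
  ∀ S : Finset (Fin k), S.card ≤ k - 2 → ∀ x, 0 < marg μ S x →
    ∀ i j : Fin k, i ∉ S → j ∉ S → i ≠ j → PairPseudo (cond μ S x) ε i j

/-- `‖f(x,·)‖_{L²(μ_x)}` for `x ∈ V_S`. -/
noncomputable def restrictNorm (μ : (∀ i, V i) → ℝ) (S : Finset (Fin k)) (x : ∀ i, V i)
    (f : (∀ i, V i) → ℝ) : ℝ :=
  Real.sqrt (∑ z, cond μ S x z * (f z) ^ 2)

/-- `f` is `(d, δ)`-global: all restrictions of at most `d` coordinates have
`2`-norm at most `δ`. -/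
def IsGlobal (μ : (∀ i, V i) → ℝ) (d : ℕ) (δ : ℝ) (f : (∀ i, V i) → ℝ) : Prop :=
  ∀ S : Finset (Fin k), S.card ≤ d → ∀ x, 0 < marg μ S x → restrictNorm μ S x f ≤ δ

/-- `f` is an `S`-junta: it depends only on the coordinates in `S`. -/
def Junta (S : Finset (Fin k)) (f : (∀ i, V i) → ℝ) : Prop :=
  ∀ x y, (∀ i ∈ S, x i = y i) → f x = f y

/-- The noise operator `T_ρ f = ∑_{S ⊆ [k]} ρ^{|S|} (1-ρ)^{k-|S|} A_S f`. -/
noncomputable def noiseOp (μ : (∀ i, V i) → ℝ) (ρ : ℝ) (f : (∀ i, V i) → ℝ)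
    (x : ∀ i, V i) : ℝ :=
  ∑ S ∈ (univ : Finset (Fin k)).powerset, ρ ^ S.card * (1 - ρ) ^ (k - S.card) * Aop μ S f x

/-- The up-down walk operator `T = (1/k) ∑_{i=1}^k A_{[k]∖{i}}`. -/
noncomputable def upDown (μ : (∀ i, V i) → ℝ) (f : (∀ i, V i) → ℝ) (x : ∀ i, V i) : ℝ :=
  (1 / (k : ℝ)) * ∑ i : Fin k, Aop μ (univ.erase i) f x

/-- The product measure `μ₁ ⊗ ⋯ ⊗ μ_k`. -/
def prodMeasure (μi : ∀ i, V i → ℝ) : (∀ i, V i) → ℝ := fun x => ∏ i, μi i (x i)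

/-- `f` has degree at most `d`: `f^{=S} = 0` whenever `|S| > d`. -/
def DegLe (μ : (∀ i, V i) → ℝ) (d : ℕ) (f : (∀ i, V i) → ℝ) : Prop :=
  ∀ S : Finset (Fin k), d < S.card → ∀ x, ES μ S f x = 0

/-- `{F S}_{S ⊆ [k]}` is an `(α, ε')`-approximate Efron–Stein decomposition of `f`. -/
noncomputable def ApproxES (μ : (∀ i, V i) → ℝ) (α ε' : ℝ) (f : (∀ i, V i) → ℝ)
    (F : Finset (Fin k) → (∀ i, V i) → ℝ) : Prop :=
  l2norm μ f ≤ α ∧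
    l2norm μ (fun x => f x - ∑ S ∈ (univ : Finset (Fin k)).powerset, F S x) ≤ ε' ∧
    ∀ S : Finset (Fin k), ∃ h : (∀ i, V i) → ℝ,
      l2norm μ h ≤ α ∧ l2norm μ (fun x => ES μ S h x - F S x) ≤ ε'


end GLL

/-!
Expanding `f^{=S} = ∑_{Q ⊆ S ∖ {i}} ± (A_Q f - A_{Q ∪ {i}} f)` for a coordinate `i ∈ S`, the
pairing of `A_Q f - A_{Q ∪ {i}} f` with an `R`-junta `h`, `i ∉ R`, is minus the expected
covariance of `F = A_{Q ∪ {i}} f` and `h` over the links of `Q`. Moving the coordinates of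
`R ∖ Q` into `Q` one at a time by the law of total covariance, each step leaves a covariance of
a function of `x_i` with a function of `x_j` in a link, which is at most `ε` times the norms by
pseudorandomness of that link's `{i, j}`-skeleton. Hence `|⟨f^{=S}, h⟩| ≤ 2^|S| |R| ε ‖f‖ ‖h‖`
whenever `S ⊄ R`. In `⟨f^{=S}, g^{=S}⟩ = ∑_{R ⊆ S} ± ⟨f^{=S}, A_R g⟩` all terms but
`⟨f^{=S}, A_S g⟩ = ⟨f^{=S}, g⟩` are of this kind, and a `T`-junta is `f = ∑_{S ⊆ T} f^{=S}`.
-/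

namespace Finset

theorem abs_sum_le_card_mul {ι : Type*} {s : Finset ι} {a : ι → ℝ} {C : ℝ}
    (h : ∀ i ∈ s, |a i| ≤ C) : |∑ i ∈ s, a i| ≤ s.card * C :=
  (abs_sum_le_sum_abs a s).trans <| by simpa using sum_le_card_nsmul s _ C h

theorem abs_sum_mul_le_sqrt_mul_sqrt {ι : Type*} {s : Finset ι} {w F a b : ι → ℝ} {c : ℝ}
    (hw : ∀ i, 0 ≤ w i) (ha : ∀ i, 0 ≤ a i) (hb : ∀ i, 0 ≤ b i)
    (hF : ∀ i ∈ s, w i ≠ 0 → |F i| ≤ c * √(a i) * √(b i)) (hc : 0 ≤ c) :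
    |∑ i ∈ s, w i * F i| ≤ c * √(∑ i ∈ s, w i * a i) * √(∑ i ∈ s, w i * b i) := by
  have hterm : ∀ i ∈ s, |w i * F i| ≤ c * (√(w i * a i) * √(w i * b i)) := fun i hi => by
    rw [abs_mul, abs_of_nonneg (hw i), Real.sqrt_mul (hw i), Real.sqrt_mul (hw i)]
    rcases eq_or_ne (w i) 0 with h0 | h0
    · simp [h0]
    · calc w i * |F i| ≤ w i * (c * √(a i) * √(b i)) :=
            mul_le_mul_of_nonneg_left (hF i hi h0) (hw i)
        _ = c * (√(w i) * √(a i) * (√(w i) * √(b i))) := by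
          linear_combination (c * √(a i) * √(b i)) * (Real.mul_self_sqrt (hw i)).symm
  calc |∑ i ∈ s, w i * F i| ≤ ∑ i ∈ s, c * (√(w i * a i) * √(w i * b i)) :=
        (abs_sum_le_sum_abs _ _).trans (sum_le_sum hterm)
    _ ≤ c * (√(∑ i ∈ s, w i * a i) * √(∑ i ∈ s, w i * b i)) := by
        rw [← mul_sum]
        exact mul_le_mul_of_nonneg_left (Real.sum_sqrt_mul_sqrt_le s
          (fun i => mul_nonneg (hw i) (ha i)) fun i => mul_nonneg (hw i) (hb i)) hc
    _ = _ := by ring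

theorem sum_powerset_sum_powerset_neg_one_pow_mul {α : Type*} [DecidableEq α] (T : Finset α)
    (a : Finset α → ℝ) :
    ∑ S ∈ T.powerset, ∑ R ∈ S.powerset, (-1 : ℝ) ^ (S.card - R.card) * a R = a T := by
  induction T using Finset.induction_on generalizing a with
  | empty => simp
  | insert i T hi ih =>
    rw [sum_powerset_insert hi, ← ih (fun R => a (insert i R)), ← sum_add_distrib]
    refine sum_congr rfl fun S hS => ?_
    have hiS : i ∉ S := fun h => hi (mem_powerset.1 hS h)
    rw [sum_powerset_insert hiS, card_insert_of_notMem hiS, ← add_assoc, ← sum_add_distrib]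
    have hcancel : ∀ R ∈ S.powerset, (-1 : ℝ) ^ (S.card - R.card) * a R +
        (-1 : ℝ) ^ (S.card + 1 - R.card) * a R = 0 := fun R hR => by
      rw [Nat.sub_add_comm (card_le_card (mem_powerset.1 hR)), pow_succ]; ring
    rw [sum_congr rfl hcancel, sum_const_zero, zero_add]
    refine sum_congr rfl fun R hR => ?_
    rw [card_insert_of_notMem fun h => hiS (mem_powerset.1 hR h), Nat.add_sub_add_right]

end Finset

namespace GLL

section

variable {k : ℕ} {V : Fin k → Type}

theorem Junta.mono {S T : Finset (Fin k)} {f : (∀ i, V i) → ℝ} (hf : Junta S f)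
    (hST : S ⊆ T) : Junta T f :=
  fun x y hxy => hf x y fun i hi => hxy i (hST hi)

section InnerProduct

variable [∀ i, Fintype (V i)]

theorem l2norm_nonneg (μ f : (∀ i, V i) → ℝ) : 0 ≤ l2norm μ f := Real.sqrt_nonneg _

theorem inner'_sum_left {ι : Type*} (μ : (∀ i, V i) → ℝ) (s : Finset ι)
    (G : ι → (∀ i, V i) → ℝ) (h : (∀ i, V i) → ℝ) :
    inner' μ (fun x => ∑ Q ∈ s, G Q x) h = ∑ Q ∈ s, inner' μ (G Q) h := by
  simp only [inner', sum_mul, mul_sum]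
  exact sum_comm

theorem inner'_sum_right {ι : Type*} (μ f : (∀ i, V i) → ℝ) (s : Finset ι)
    (G : ι → (∀ i, V i) → ℝ) :
    inner' μ f (fun x => ∑ Q ∈ s, G Q x) = ∑ Q ∈ s, inner' μ f (G Q) := by
  simp only [inner', mul_sum]
  exact sum_comm

theorem inner'_const_mul_left (μ : (∀ i, V i) → ℝ) (c : ℝ) (f g : (∀ i, V i) → ℝ) :
    inner' μ (fun x => c * f x) g = c * inner' μ f g := by
  simp only [inner', mul_sum]
  exact sum_congr rfl fun x _ => by ring

theorem inner'_const_mul_right (μ f : (∀ i, V i) → ℝ) (c : ℝ) (g : (∀ i, V i) → ℝ) :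
    inner' μ f (fun x => c * g x) = c * inner' μ f g := by
  simp only [inner', mul_sum]
  exact sum_congr rfl fun x _ => by ring

end InnerProduct

variable [∀ i, Fintype (V i)] [∀ i, DecidableEq (V i)] {μ : (∀ i, V i) → ℝ}

section Averaging

variable {S T : Finset (Fin k)} {x y z : ∀ i, V i} {f φ ψ : (∀ i, V i) → ℝ}

theorem marg_nonneg (hμ0 : ∀ x, 0 ≤ μ x) (S : Finset (Fin k)) (x : ∀ i, V i) :
    0 ≤ marg μ S x :=
  sum_nonneg fun z _ => by split_ifs <;> simp [hμ0 z]

theorem marg_pos (hμ0 : ∀ x, 0 ≤ μ x) (hx : 0 < μ x) : 0 < marg μ S x :=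
  hx.trans_le <| by
    simpa [marg] using single_le_sum (f := fun z => if ∀ i ∈ S, z i = x i then μ z else 0)
      (fun z _ => by split_ifs <;> simp [hμ0 z]) (mem_univ x)

theorem marg_congr (μ : (∀ i, V i) → ℝ) (hxy : ∀ i ∈ S, x i = y i) :
    marg μ S x = marg μ S y :=
  sum_congr rfl fun _ _ => if_congr ⟨fun h i hi => (h i hi).trans (hxy i hi),
    fun h i hi => (h i hi).trans (hxy i hi).symm⟩ rfl rfl

theorem cond_nonneg (hμ0 : ∀ x, 0 ≤ μ x) (S : Finset (Fin k)) (x z : ∀ i, V i) :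
    0 ≤ cond μ S x z := by
  unfold cond; split_ifs
  exacts [div_nonneg (hμ0 z) (marg_nonneg hμ0 S x), le_rfl]

theorem cond_of_not_agree (h : ¬ ∀ i ∈ S, z i = x i) : cond μ S x z = 0 := if_neg h

theorem sum_cond (h : marg μ S x ≠ 0) : ∑ z, cond μ S x z = 1 := by
  calc ∑ z, cond μ S x z = (∑ z, if ∀ i ∈ S, z i = x i then μ z else 0) / marg μ S x := by
        rw [sum_div]; exact sum_congr rfl fun z _ => by unfold cond; split_ifs <;> simp
    _ = 1 := div_self h

theorem mul_cond_comm (μ : (∀ i, V i) → ℝ) (S : Finset (Fin k)) (x z : ∀ i, V i) :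
    μ x * cond μ S x z = μ z * cond μ S z x := by
  unfold cond
  by_cases h : ∀ i ∈ S, z i = x i
  · have h' : ∀ i ∈ S, x i = z i := fun i hi => (h i hi).symm
    rw [if_pos h, if_pos h', marg_congr μ h']
    ring
  · rw [if_neg h, if_neg fun h' => h fun i hi => (h' i hi).symm, mul_zero, mul_zero]

theorem cond_pos_of_ne_zero (hμ0 : ∀ x, 0 ≤ μ x) (h : cond μ S x z ≠ 0) : 0 < μ z := by
  refine (hμ0 z).lt_of_ne fun h0 => h ?_
  unfold cond; split_ifs <;> simp [← h0]

theorem Aop_congr (h : ∀ z, (∀ i ∈ S, z i = x i) → φ z = ψ z) :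
    Aop μ S φ x = Aop μ S ψ x :=
  sum_congr rfl fun z _ => by
    by_cases hz : ∀ i ∈ S, z i = x i
    · rw [h z hz]
    · rw [cond_of_not_agree hz, zero_mul, zero_mul]

theorem Aop_sub (μ : (∀ i, V i) → ℝ) (S : Finset (Fin k)) (φ ψ : (∀ i, V i) → ℝ)
    (x : ∀ i, V i) : Aop μ S (fun z => φ z - ψ z) x = Aop μ S φ x - Aop μ S ψ x := by
  simp only [Aop, mul_sub, sum_sub_distrib]

theorem Aop_nonneg (hμ0 : ∀ x, 0 ≤ μ x) (hφ : ∀ z, 0 ≤ φ z) (x : ∀ i, V i) :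
    0 ≤ Aop μ S φ x :=
  sum_nonneg fun z _ => mul_nonneg (cond_nonneg hμ0 S x z) (hφ z)

theorem Aop_sq_nonneg (hμ0 : ∀ x, 0 ≤ μ x) (φ : (∀ i, V i) → ℝ) (x : ∀ i, V i) :
    0 ≤ Aop μ S (fun z => φ z ^ 2) x :=
  Aop_nonneg hμ0 (fun _ => sq_nonneg _) x

theorem Aop_mono (hμ0 : ∀ x, 0 ≤ μ x) (hφψ : ∀ z, φ z ≤ ψ z) (x : ∀ i, V i) :
    Aop μ S φ x ≤ Aop μ S ψ x :=
  sum_le_sum fun z _ => mul_le_mul_of_nonneg_left (hφψ z) (cond_nonneg hμ0 S x z)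

theorem junta_Aop (μ : (∀ i, V i) → ℝ) (S : Finset (Fin k)) (f : (∀ i, V i) → ℝ) :
    Junta S (Aop μ S f) := by
  intro x y hxy
  refine sum_congr rfl fun z _ => ?_
  unfold cond
  rw [marg_congr μ hxy]
  exact congrArg (· * f z) (if_congr ⟨fun h i hi => (h i hi).trans (hxy i hi),
    fun h i hi => (h i hi).trans (hxy i hi).symm⟩ rfl rfl)

theorem Aop_of_junta (hf : Junta S f) (hm : marg μ S x ≠ 0) : Aop μ S f x = f x := by
  rw [Aop_congr (ψ := fun _ => f x) fun z hz => hf z x hz, Aop, ← sum_mul, sum_cond hm, one_mul]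

theorem Aop_mul_junta (hψ : Junta S ψ) (φ : (∀ i, V i) → ℝ) (x : ∀ i, V i) :
    Aop μ S (fun z => φ z * ψ z) x = Aop μ S φ x * ψ x := by
  rw [Aop_congr (ψ := fun z => φ z * ψ x) fun z hz => by rw [hψ z x hz], Aop, Aop, sum_mul]
  exact sum_congr rfl fun z _ => (mul_assoc _ _ _).symm

theorem sq_Aop_le (hμ0 : ∀ x, 0 ≤ μ x) (φ : (∀ i, V i) → ℝ) (x : ∀ i, V i) :
    Aop μ S φ x ^ 2 ≤ Aop μ S (fun z => φ z ^ 2) x := by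
  have hCS := sum_sq_le_sum_mul_sum_of_sq_le_mul univ (r := fun z => cond μ S x z * φ z)
    (fun z _ => cond_nonneg hμ0 S x z)
    (fun z _ => mul_nonneg (cond_nonneg hμ0 S x z) (sq_nonneg (φ z))) fun z _ => le_of_eq (by ring)
  by_cases hm : marg μ S x = 0
  · simp [Aop, cond, hm]
  · rwa [sum_cond hm, one_mul] at hCS

theorem inner'_Aop_comm (μ : (∀ i, V i) → ℝ) (S : Finset (Fin k)) (f g : (∀ i, V i) → ℝ) :
    inner' μ (Aop μ S f) g = inner' μ f (Aop μ S g) := by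
  simp only [inner', Aop, sum_mul, mul_sum]
  rw [sum_comm]
  refine sum_congr rfl fun x _ => sum_congr rfl fun z _ => ?_
  linear_combination (f x * g z) * mul_cond_comm μ S z x

theorem inner'_Aop_of_junta (hμ0 : ∀ x, 0 ≤ μ x) (hψ : Junta S ψ) (f : (∀ i, V i) → ℝ) :
    inner' μ ψ (Aop μ S f) = inner' μ ψ f := by
  rw [← inner'_Aop_comm]
  refine sum_congr rfl fun x _ => ?_
  rcases (hμ0 x).eq_or_lt with h0 | h0
  · rw [← h0, zero_mul, zero_mul]
  · rw [Aop_of_junta hψ (marg_pos hμ0 h0).ne']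

theorem expect_Aop (hμ0 : ∀ x, 0 ≤ μ x) (S : Finset (Fin k)) (φ : (∀ i, V i) → ℝ) :
    expect μ (Aop μ S φ) = expect μ φ := by
  simpa [inner', expect] using
    inner'_Aop_of_junta (S := S) (ψ := fun _ => 1) hμ0 (fun _ _ _ => rfl) φ

theorem Aop_eq_inner'_div (μ : (∀ i, V i) → ℝ) (S : Finset (Fin k)) (φ : (∀ i, V i) → ℝ)
    (x : ∀ i, V i) :
    Aop μ S φ x = inner' μ (fun z => if ∀ i ∈ S, z i = x i then 1 else 0) φ / marg μ S x := by
  rw [inner', sum_div]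
  exact sum_congr rfl fun z _ => by unfold cond; split_ifs <;> ring

theorem Aop_Aop_of_subset (hμ0 : ∀ x, 0 ≤ μ x) (hST : S ⊆ T) (f : (∀ i, V i) → ℝ)
    (x : ∀ i, V i) : Aop μ S (Aop μ T f) x = Aop μ S f x := by
  have hjunta : Junta T fun z => if ∀ i ∈ S, z i = x i then (1 : ℝ) else 0 := fun z y hzy =>
    if_congr ⟨fun h i hi => (hzy i (hST hi)).symm.trans (h i hi),
      fun h i hi => (hzy i (hST hi)).trans (h i hi)⟩ rfl rfl
  rw [Aop_eq_inner'_div, Aop_eq_inner'_div, inner'_Aop_of_junta hμ0 hjunta]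

theorem normSq_Aop_le (hμ0 : ∀ x, 0 ≤ μ x) (S : Finset (Fin k)) (f : (∀ i, V i) → ℝ) :
    normSq μ (Aop μ S f) ≤ normSq μ f :=
  calc normSq μ (Aop μ S f) ≤ expect μ (Aop μ S fun z => f z ^ 2) :=
        sum_le_sum fun x _ => mul_le_mul_of_nonneg_left (sq_Aop_le hμ0 f x) (hμ0 x)
    _ = normSq μ f := expect_Aop hμ0 S _

theorem l2norm_Aop_le (hμ0 : ∀ x, 0 ≤ μ x) (S : Finset (Fin k)) (f : (∀ i, V i) → ℝ) :
    l2norm μ (Aop μ S f) ≤ l2norm μ f :=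
  Real.sqrt_le_sqrt (normSq_Aop_le hμ0 S f)

end Averaging

section Covariance

variable {W W' : Finset (Fin k)} {x : ∀ i, V i} {φ φ' ψ ψ' : (∀ i, V i) → ℝ} {ε : ℝ}
  {i j : Fin k}

noncomputable def condCov (μ : (∀ i, V i) → ℝ) (W : Finset (Fin k)) (φ ψ : (∀ i, V i) → ℝ)
    (x : ∀ i, V i) : ℝ :=
  Aop μ W (fun z => φ z * ψ z) x - Aop μ W φ x * Aop μ W ψ x

theorem condCov_congr (hφ : ∀ z, (∀ i ∈ W, z i = x i) → φ z = φ' z)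
    (hψ : ∀ z, (∀ i ∈ W, z i = x i) → ψ z = ψ' z) :
    condCov μ W φ ψ x = condCov μ W φ' ψ' x := by
  rw [condCov, condCov, Aop_congr hφ, Aop_congr hψ,
    Aop_congr fun z hz => by rw [hφ z hz, hψ z hz]]

/-- The law of total covariance. -/
theorem condCov_eq_Aop_condCov_add (hμ0 : ∀ x, 0 ≤ μ x) (hWW' : W ⊆ W') :
    condCov μ W φ ψ x = Aop μ W (condCov μ W' φ ψ) x + condCov μ W φ (Aop μ W' ψ) x := by
  have hpull : Aop μ W (fun z => Aop μ W' φ z * Aop μ W' ψ z) x =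
      Aop μ W (fun z => φ z * Aop μ W' ψ z) x := by
    rw [← Aop_Aop_of_subset hμ0 hWW' (fun z => φ z * Aop μ W' ψ z)]
    exact Aop_congr fun z _ => (Aop_mul_junta (junta_Aop μ W' ψ) φ z).symm
  unfold condCov
  rw [Aop_sub, Aop_Aop_of_subset hμ0 hWW', hpull, Aop_Aop_of_subset hμ0 hWW']
  ring

theorem expect_condCov (hμ0 : ∀ x, 0 ≤ μ x) (W : Finset (Fin k)) (φ ψ : (∀ i, V i) → ℝ) :
    expect μ (condCov μ W φ ψ) = inner' μ (fun x => φ x - Aop μ W φ x) ψ := by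
  calc expect μ (condCov μ W φ ψ)
      = expect μ (Aop μ W fun z => (φ z - Aop μ W φ z) * ψ z) := by
        refine sum_congr rfl fun x _ => ?_
        rw [condCov, mul_comm (Aop μ W φ x), ← Aop_mul_junta (junta_Aop μ W φ), ← Aop_sub,
          Aop_congr (ψ := fun z => (φ z - Aop μ W φ z) * ψ z) fun z _ => by ring]
    _ = inner' μ (fun x => φ x - Aop μ W φ x) ψ := expect_Aop hμ0 W _

theorem abs_condCov_le_of_pairPseudo (hμ0 : ∀ x, 0 ≤ μ x) (hε : 0 ≤ ε)
    (hpair : PairPseudo (cond μ W x) ε i j) (hφ : Junta (insert i W) φ)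
    (hψ : Junta (insert j W) ψ) :
    |condCov μ W φ ψ x| ≤
      ε * √(Aop μ W (fun z => φ z ^ 2) x) * √(Aop μ W (fun z => ψ z ^ 2) x) := by
  have hupdate : ∀ {l : Fin k} {F : (∀ i, V i) → ℝ}, Junta (insert l W) F →
      ∀ z, (∀ m ∈ W, z m = x m) → F z = F (Function.update x l (z l)) := by
    intro l F hF z hz
    refine hF _ _ fun m hm => ?_
    rcases eq_or_ne m l with rfl | hml
    · rw [Function.update_self]
    · rw [Function.update_of_ne hml, hz m ((mem_insert.1 hm).resolve_left hml)]
  set u : V i → ℝ := fun v => φ (Function.update x i v)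
  set v : V j → ℝ := fun w => ψ (Function.update x j w)
  have hφu : ∀ z, (∀ l ∈ W, z l = x l) → φ z = u (z i) := hupdate hφ
  have hψv : ∀ z, (∀ l ∈ W, z l = x l) → ψ z = v (z j) := hupdate hψ
  have hvar : ∀ F : (∀ i, V i) → ℝ, 0 ≤ Aop μ W (fun z => F z ^ 2) x - Aop μ W F x ^ 2 ∧
      Aop μ W (fun z => F z ^ 2) x - Aop μ W F x ^ 2 ≤ Aop μ W (fun z => F z ^ 2) x :=
    fun F => ⟨sub_nonneg.2 (sq_Aop_le hμ0 F x), sub_le_self _ (sq_nonneg _)⟩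
  rw [condCov_congr hφu hψv, Aop_congr fun z hz => by rw [hφu z hz],
    Aop_congr (φ := fun z => ψ z ^ 2) fun z hz => by rw [hψv z hz]]
  rw [mul_assoc, ← Real.sqrt_mul (Aop_sq_nonneg hμ0 _ x)]
  exact (hpair u v).trans (mul_le_mul_of_nonneg_left (Real.sqrt_le_sqrt (mul_le_mul
    (hvar _).2 (hvar _).2 (hvar _).1 (Aop_sq_nonneg hμ0 _ x))) hε)

theorem abs_condCov_le (hμ0 : ∀ x, 0 ≤ μ x) (hε : 0 ≤ ε) (hprod : EpsProduct μ ε)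
    (B : Finset (Fin k)) :
    ∀ {W : Finset (Fin k)} {x : ∀ i, V i} {φ ψ : (∀ i, V i) → ℝ}, Disjoint W B → i ∉ W →
      i ∉ B → 0 < marg μ W x → Junta (insert i W) φ → Junta (W ∪ B) ψ →
      |condCov μ W φ ψ x| ≤
        B.card * ε * √(Aop μ W (fun z => φ z ^ 2) x) * √(Aop μ W (fun z => ψ z ^ 2) x) := by
  induction B using Finset.induction_on with
  | empty =>
    intro W x φ ψ _ _ _ hx _ hψ
    rw [union_empty] at hψ
    simp [condCov, Aop_mul_junta hψ, Aop_of_junta hψ hx.ne']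
  | insert j B hjB ih =>
    intro W x φ ψ hWB hiW hiB hx hφ hψ
    have hjW : j ∉ W := fun h => disjoint_left.1 hWB h (mem_insert_self j B)
    have hij : i ≠ j := fun h => hiB (h ▸ mem_insert_self j B)
    have hWcard : W.card ≤ k - 2 := by
      have := card_le_univ (insert i (insert j W))
      rw [card_insert_of_notMem (by simp [hij, hiW]), card_insert_of_notMem hjW,
        Fintype.card_fin] at this
      omega
    have hinner : |Aop μ W (condCov μ (insert j W) φ ψ) x| ≤
        B.card * ε * √(Aop μ W (fun z => φ z ^ 2) x) * √(Aop μ W (fun z => ψ z ^ 2) x) := by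
      have h := abs_sum_mul_le_sqrt_mul_sqrt (s := univ) (c := B.card * ε)
        (cond_nonneg hμ0 W x) (Aop_sq_nonneg hμ0 φ) (Aop_sq_nonneg hμ0 ψ)
        (fun z _ hz => ih (disjoint_insert_left.2 ⟨hjB, hWB.mono_right (subset_insert j B)⟩)
          (by simp [hij, hiW]) (fun h => hiB (mem_insert_of_mem h))
          (marg_pos hμ0 (cond_pos_of_ne_zero hμ0 hz))
          (hφ.mono (insert_subset_insert i (subset_insert j W)))
          (by rwa [insert_union, ← union_insert])) (by positivity)
      rwa [← Aop, ← Aop, ← Aop, Aop_Aop_of_subset hμ0 (subset_insert j W),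
        Aop_Aop_of_subset hμ0 (subset_insert j W)] at h
    have hcoarse : Aop μ W (fun z => Aop μ (insert j W) ψ z ^ 2) x ≤
        Aop μ W (fun z => ψ z ^ 2) x :=
      (Aop_mono hμ0 (fun z => sq_Aop_le hμ0 ψ z) x).trans_eq
        (Aop_Aop_of_subset hμ0 (subset_insert j W) _ x)
    have houter : |condCov μ W φ (Aop μ (insert j W) ψ) x| ≤
        ε * √(Aop μ W (fun z => φ z ^ 2) x) * √(Aop μ W (fun z => ψ z ^ 2) x) := by
      refine (abs_condCov_le_of_pairPseudo hμ0 hε (hprod W hWcard x hx i j hiW hjW hij) hφ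
        (junta_Aop μ _ ψ)).trans ?_
      gcongr
    rw [condCov_eq_Aop_condCov_add hμ0 (subset_insert j W), card_insert_of_notMem hjB]
    calc _ ≤ _ := abs_add_le _ _
      _ ≤ _ := add_le_add hinner houter
      _ = _ := by push_cast; ring

end Covariance

section EfronStein

variable {ε : ℝ} {i : Fin k} {Q R S T : Finset (Fin k)} {f h : (∀ i, V i) → ℝ}

theorem abs_inner'_Aop_sub_Aop_insert_le (hμ0 : ∀ x, 0 ≤ μ x) (hε : 0 ≤ ε)
    (hprod : EpsProduct μ ε) (hiR : i ∉ R) (hiQ : i ∉ Q) (hh : Junta R h)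
    (f : (∀ i, V i) → ℝ) :
    |inner' μ (fun x => Aop μ Q f x - Aop μ (insert i Q) f x) h| ≤
      R.card * ε * l2norm μ f * l2norm μ h := by
  set F := Aop μ (insert i Q) f with hF
  have hcov : inner' μ (fun x => Aop μ Q f x - F x) h = -expect μ (condCov μ Q F h) := by
    rw [expect_condCov hμ0, inner', inner', ← sum_neg_distrib]
    exact sum_congr rfl fun x _ => by rw [hF, Aop_Aop_of_subset hμ0 (subset_insert i Q)]; ring
  have hRQ : R ⊆ Q ∪ R \ Q := by rw [union_sdiff_self_eq_union]; exact subset_union_right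
  have hpoint : ∀ x ∈ univ, μ x ≠ 0 → |condCov μ Q F h x| ≤ (R \ Q).card * ε *
      √(Aop μ Q (fun z => F z ^ 2) x) * √(Aop μ Q (fun z => h z ^ 2) x) :=
    fun x _ hx => abs_condCov_le hμ0 hε hprod (R \ Q) disjoint_sdiff hiQ
      (fun h => hiR (mem_sdiff.1 h).1) (marg_pos hμ0 ((hμ0 x).lt_of_ne' hx)) (junta_Aop μ _ f)
      (hh.mono hRQ)
  have hnorm : ∀ G : (∀ i, V i) → ℝ, √(∑ x, μ x * Aop μ Q (fun z => G z ^ 2) x) = l2norm μ G :=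
    fun G => congrArg Real.sqrt (expect_Aop hμ0 Q _)
  have hbound := abs_sum_mul_le_sqrt_mul_sqrt hμ0 (Aop_sq_nonneg hμ0 F) (Aop_sq_nonneg hμ0 h)
    hpoint (by positivity)
  rw [hnorm, hnorm] at hbound
  rw [hcov, abs_neg]
  refine hbound.trans ?_
  have hFf := l2norm_Aop_le hμ0 (insert i Q) f
  have := l2norm_nonneg μ F
  have := l2norm_nonneg μ h
  gcongr
  exact sdiff_subset

theorem junta_ES (μ : (∀ i, V i) → ℝ) (S : Finset (Fin k)) (f : (∀ i, V i) → ℝ) :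
    Junta S (ES μ S f) := fun x y hxy =>
  sum_congr rfl fun T hT => by rw [junta_Aop μ T f x y fun i hi => hxy i (mem_powerset.1 hT hi)]

theorem sum_ES_powerset (μ : (∀ i, V i) → ℝ) (T : Finset (Fin k)) (f : (∀ i, V i) → ℝ)
    (x : ∀ i, V i) : ∑ S ∈ T.powerset, ES μ S f x = Aop μ T f x :=
  sum_powerset_sum_powerset_neg_one_pow_mul T fun R => Aop μ R f x

theorem ES_eq_sum_Aop_sub_Aop_insert (μ : (∀ i, V i) → ℝ) (f : (∀ i, V i) → ℝ) (hiS : i ∈ S)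
    (x : ∀ i, V i) :
    ES μ S f x = ∑ Q ∈ (S.erase i).powerset,
      (-1 : ℝ) ^ (S.card - Q.card) * (Aop μ Q f x - Aop μ (insert i Q) f x) := by
  rw [ES, ← insert_erase hiS, sum_powerset_insert (notMem_erase i S), ← sum_add_distrib,
    insert_erase hiS]
  refine sum_congr rfl fun Q hQ => ?_
  have hQ' : Q ⊆ S.erase i := mem_powerset.1 hQ
  have hiQ : i ∉ Q := fun h => notMem_erase i S (hQ' h)
  have hQS : Q.card < S.card := (card_le_card hQ').trans_lt (card_erase_lt_of_mem hiS)
  rw [card_insert_of_notMem hiQ, show S.card - Q.card = S.card - (Q.card + 1) + 1 by omega,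
    pow_succ]
  ring

theorem abs_inner'_ES_le_of_junta (hμ0 : ∀ x, 0 ≤ μ x) (hε : 0 ≤ ε) (hprod : EpsProduct μ ε)
    (hSR : ¬ S ⊆ R) (hh : Junta R h) (f : (∀ i, V i) → ℝ) :
    |inner' μ (ES μ S f) h| ≤ 2 ^ S.card * R.card * ε * l2norm μ f * l2norm μ h := by
  obtain ⟨i, hiS, hiR⟩ := not_subset.1 hSR
  rw [funext (ES_eq_sum_Aop_sub_Aop_insert μ f hiS), inner'_sum_left]
  refine (abs_sum_le_card_mul (C := R.card * ε * l2norm μ f * l2norm μ h) fun Q hQ => ?_).trans ?_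
  · rw [inner'_const_mul_left, abs_mul, abs_pow, abs_neg, abs_one, one_pow, one_mul]
    exact abs_inner'_Aop_sub_Aop_insert_le hμ0 hε hprod hiR
      (fun h => notMem_erase i S (mem_powerset.1 hQ h)) hh f
  · have hcard : ((S.erase i).powerset.card : ℝ) ≤ 2 ^ S.card := by
      rw [card_powerset]; exact_mod_cast Nat.pow_le_pow_right two_pos card_erase_le
    have := l2norm_nonneg μ f
    have := l2norm_nonneg μ h
    calc _ ≤ (2 : ℝ) ^ S.card * (R.card * ε * l2norm μ f * l2norm μ h) := by gcongr
      _ = _ := by ring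

theorem abs_inner'_ES_sub_inner'_ES_le (hμ0 : ∀ x, 0 ≤ μ x) (hε : 0 ≤ ε)
    (hprod : EpsProduct μ ε) (S : Finset (Fin k)) (f g : (∀ i, V i) → ℝ) :
    |inner' μ (ES μ S f) g - inner' μ (ES μ S f) (ES μ S g)| ≤
      2 ^ (3 * S.card) * ε * l2norm μ f * l2norm μ g := by
  have htop : inner' μ (ES μ S f) (Aop μ S g) = inner' μ (ES μ S f) g :=
    inner'_Aop_of_junta hμ0 (junta_ES μ S f) g
  have hexpand : inner' μ (ES μ S f) (ES μ S g) = ∑ R ∈ S.powerset,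
      (-1 : ℝ) ^ (S.card - R.card) * inner' μ (ES μ S f) (Aop μ R g) := by
    rw [show ES μ S g = fun x => ∑ R ∈ S.powerset, (-1 : ℝ) ^ (S.card - R.card) * Aop μ R g x
      from rfl, inner'_sum_right]
    exact sum_congr rfl fun R _ => inner'_const_mul_right _ _ _ _
  rw [hexpand, ← add_sum_erase _ _ (mem_powerset_self S), Nat.sub_self, pow_zero, one_mul, htop,
    sub_add_cancel_left, abs_neg]
  refine (abs_sum_le_card_mul
    (C := 2 ^ S.card * 2 ^ S.card * ε * l2norm μ f * l2norm μ g) fun R hR => ?_).trans ?_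
  · have hRS : R ⊆ S := mem_powerset.1 (mem_of_mem_erase hR)
    rw [abs_mul, abs_pow, abs_neg, abs_one, one_pow, one_mul]
    refine (abs_inner'_ES_le_of_junta hμ0 hε hprod
      (fun h => ne_of_mem_erase hR (hRS.antisymm h)) (junta_Aop μ R g) f).trans ?_
    have hR : (R.card : ℝ) ≤ 2 ^ S.card := by
      exact_mod_cast (card_le_card hRS).trans (Nat.lt_two_pow_self).le
    have hg := l2norm_Aop_le hμ0 R g
    have := l2norm_nonneg μ f
    have := l2norm_nonneg μ (Aop μ R g)
    gcongr
  · have hcard : ((S.powerset.erase S).card : ℝ) ≤ 2 ^ S.card := by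
      exact_mod_cast card_powerset S ▸ card_erase_le
    have := l2norm_nonneg μ f
    have := l2norm_nonneg μ g
    calc _ ≤ (2 : ℝ) ^ S.card * (2 ^ S.card * 2 ^ S.card * ε * l2norm μ f * l2norm μ g) := by
          gcongr
      _ = _ := by rw [show 3 * S.card = S.card + S.card + S.card by ring, pow_add, pow_add]; ring

theorem inner'_eq_sum_inner'_ES_of_junta (hμ0 : ∀ x, 0 ≤ μ x) (hf : Junta T f)
    (g : (∀ i, V i) → ℝ) : inner' μ f g = ∑ S ∈ T.powerset, inner' μ (ES μ S f) g := by
  rw [← inner'_sum_left]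
  refine sum_congr rfl fun x _ => ?_
  rcases (hμ0 x).eq_or_lt with h0 | h0
  · rw [← h0, zero_mul, zero_mul]
  · dsimp only
    rw [sum_ES_powerset, Aop_of_junta hf (marg_pos hμ0 h0).ne']

theorem abs_inner'_sub_sum_inner'_ES_le_of_junta (hμ0 : ∀ x, 0 ≤ μ x) (hε : 0 ≤ ε)
    (hprod : EpsProduct μ ε) (hf : Junta T f) (g : (∀ i, V i) → ℝ) :
    |inner' μ f g - ∑ S ∈ T.powerset, inner' μ (ES μ S f) (ES μ S g)| ≤
      2 ^ (4 * T.card) * ε * l2norm μ f * l2norm μ g := by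
  rw [inner'_eq_sum_inner'_ES_of_junta hμ0 hf, ← sum_sub_distrib]
  refine (abs_sum_le_card_mul (C := 2 ^ (3 * T.card) * ε * l2norm μ f * l2norm μ g)
    fun S hS => (abs_inner'_ES_sub_inner'_ES_le hμ0 hε hprod S f g).trans ?_).trans_eq ?_
  · have := l2norm_nonneg μ f
    have := l2norm_nonneg μ g
    gcongr
    exacts [one_le_two, mem_powerset.1 hS]
  · rw [card_powerset, show 4 * T.card = T.card + 3 * T.card by ring, pow_add]
    push_cast
    ring

end EfronStein

end

theorem statement15_general (k : ℕ)
    (V : Fin k → Type) [∀ i, Fintype (V i)] [∀ i, DecidableEq (V i)]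
    (μ : (∀ i, V i) → ℝ) (ε : ℝ) (hε : 0 ≤ ε) (hμ : IsProb μ) (hprod : EpsProduct μ ε)
    (f g : (∀ i, V i) → ℝ) :
    (|inner' μ f g -
          ∑ S ∈ (univ : Finset (Fin k)).powerset, inner' μ (ES μ S f) (ES μ S g)| ≤
        2 ^ (4 * k) * ε * l2norm μ f * l2norm μ g) ∧
      ∀ T : Finset (Fin k), Junta T f →
        |inner' μ f g - ∑ S ∈ T.powerset, inner' μ (ES μ S f) (ES μ S g)| ≤
          2 ^ (4 * T.card) * ε * l2norm μ f * l2norm μ g := by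
  have hjunta := fun T (hT : Junta T f) =>
    abs_inner'_sub_sum_inner'_ES_le_of_junta hμ.1 hε hprod hT g
  refine ⟨?_, hjunta⟩
  simpa using hjunta univ fun x y hxy => congrArg f (funext fun i => hxy i (mem_univ i))

theorem statement15 (k : ℕ) (hk : 1 ≤ k)
    (V : Fin k → Type) [∀ i, Fintype (V i)] [∀ i, DecidableEq (V i)]
    (μ : (∀ i, V i) → ℝ) (ε : ℝ) (hε : 0 ≤ ε) (hμ : IsProb μ) (hprod : EpsProduct μ ε)
    (f g : (∀ i, V i) → ℝ) :
    (|inner' μ f g -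
          ∑ S ∈ (univ : Finset (Fin k)).powerset, inner' μ (ES μ S f) (ES μ S g)| ≤
        2 ^ (4 * k) * ε * l2norm μ f * l2norm μ g) ∧
      ∀ T : Finset (Fin k), Junta T f →
        |inner' μ f g - ∑ S ∈ T.powerset, inner' μ (ES μ S f) (ES μ S g)| ≤
          2 ^ (4 * T.card) * ε * l2norm μ f * l2norm μ g :=
  statement15_general k V μ ε hε hμ hprod f g

end GLL
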